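/- For u ∈ U, the dual characterization of the U^{1,p} norm holds: sup over v ∈ U with ‖v'‖_{ℓ^q_ε} = 1 of ⟨u', v'⟩ ≤ ‖u'‖_{ℓ^p_ε} ≤ 2 · sup over v ∈ U with ‖v'‖_{ℓ^q_ε} = 1 of ⟨u', v'⟩, where 1/p + 1/q = 1. -/

import Mathlib

/-!
Hölder's inequality `⟨u', v'⟩ ≤ ‖u'‖_p ‖v'‖_q` gives the first inequality. For the second, take
`τ` with `‖τ‖_q ≤ 1` and `⟨u', τ⟩ = ‖u'‖_p`: `sign u' · |u'|^(p-1) / ‖u'‖_p^(p-1)`, or a signed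
Dirac mass at a largest entry of `u'` when `p = ∞`. The strain `u'` has zero sum (it telescopes),
so subtracting from `τ` its mean does not change `⟨u', τ⟩`; by Hölder against the constant `1`,
with `‖1‖_p ‖1‖_q = ⟨1, 1⟩`, it at most doubles `‖τ‖_q`. Every zero-sum strain is `v'` for some
`v ∈ U` (partial sums), so the normalised projection of `τ` competes in the supremum and
`‖u'‖_p ≤ 2 S`.
-/

open scoped ENNReal

/-- The ℓ^p_ε norm on strains (vectors indexed by ℓ = -N+1,…,N),
for an extended-real exponent p ∈ [1,∞]. -/
noncomputable def lpnorm (N : ℕ) (ε : ℝ) (p : ℝ≥0∞) (σ : ℤ → ℝ) : ℝ :=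
  if p = ⊤ then ⨆ ℓ : Finset.Icc (-(N : ℤ) + 1) (N : ℤ), |σ (ℓ : ℤ)|
  else (ε * ∑ ℓ ∈ Finset.Icc (-(N : ℤ) + 1) (N : ℤ), |σ ℓ| ^ p.toReal)
    ^ (1 / p.toReal)

-- Also for `{p, q} = {1, ∞}`, because `∞.toReal⁻¹ = 0⁻¹ = 0`.
theorem ENNReal.HolderConjugate.inv_toReal_add_inv_toReal {p q : ℝ≥0∞} [p.HolderConjugate q] :
    p.toReal⁻¹ + q.toReal⁻¹ = 1 := by
  rw [← ENNReal.toReal_inv, ← ENNReal.toReal_inv, ← ENNReal.toReal_add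
    (ENNReal.inv_ne_top.2 (ENNReal.HolderConjugate.ne_zero p q))
    (ENNReal.inv_ne_top.2 (ENNReal.HolderConjugate.ne_zero q p)),
    ENNReal.HolderConjugate.inv_add_inv_eq_one p q, ENNReal.toReal_one]

theorem ENNReal.HolderConjugate.rpow_inv_toReal_mul_rpow_inv_toReal {p q : ℝ≥0∞}
    [p.HolderConjugate q] {x : ℝ} (hx : 0 ≤ x) : x ^ p.toReal⁻¹ * x ^ q.toReal⁻¹ = x := by
  rw [← Real.rpow_add' hx (by rw [inv_toReal_add_inv_toReal]; exact one_ne_zero),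
    inv_toReal_add_inv_toReal, Real.rpow_one]

theorem sSup_le_and_le_mul_sSup_of_mem {A : Set ℝ} {a b c : ℝ} (hc : 0 ≤ c)
    (ha : ∀ s ∈ A, s ≤ a) (hb : b ∈ A) (hab : a ≤ c * b) : sSup A ≤ a ∧ a ≤ c * sSup A :=
  ⟨csSup_le ⟨b, hb⟩ ha, hab.trans (by gcongr; exact le_csSup ⟨a, ha⟩ hb)⟩

namespace PiLp

variable {ι : Type*} [Fintype ι] {p q : ℝ≥0∞}

theorem norm_rpow_eq_sum {β : ι → Type*} [∀ i, SeminormedAddCommGroup (β i)]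
    (hp : 0 < p.toReal) (x : PiLp p β) : ‖x‖ ^ p.toReal = ∑ i, ‖x i‖ ^ p.toReal := by
  rw [norm_eq_sum hp, ← Real.rpow_mul (by positivity), one_div_mul_cancel hp.ne', Real.rpow_one]

theorem abs_sum_mul_le_norm_mul_norm [p.HolderConjugate q]
    (x : PiLp p fun _ : ι => ℝ) (y : PiLp q fun _ : ι => ℝ) :
    |∑ i, x i * y i| ≤ ‖x‖ * ‖y‖ := by
  have : Fact (1 ≤ p) := ⟨ENNReal.HolderConjugate.one_le p q⟩
  have : Fact (1 ≤ q) := ⟨ENNReal.HolderConjugate.one_le q p⟩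
  let B : ι → ℝ →L[ℝ] ℝ →L[ℝ] ℝ := fun _ => ContinuousLinearMap.mul ℝ ℝ
  have hB : ∀ i, ‖B i‖ ≤ (1 : NNReal) := fun _ => ContinuousLinearMap.opNorm_mul_le ℝ ℝ
  let x' := (lpPiLpₗᵢ (fun _ : ι => ℝ) ℝ).symm x
  let y' := (lpPiLpₗᵢ (fun _ : ι => ℝ) ℝ).symm y
  calc |∑ i, x i * y i| = ‖lp.dualPairing p q B hB x' y'‖ := by
        rw [lp.dualPairing_apply, tsum_fintype]; rfl
    _ ≤ ‖lp.dualPairing p q B hB‖ * ‖x'‖ * ‖y'‖ := ContinuousLinearMap.le_opNorm₂ _ _ _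
    _ ≤ 1 * ‖x'‖ * ‖y'‖ := by gcongr; exact lp.norm_dualPairing B hB
    _ = ‖x‖ * ‖y‖ := by simp [x', y']

theorem exists_norm_le_one_sum_mul_eq_norm_of_top (x : PiLp ∞ fun _ : ι => ℝ) (hx : x ≠ 0) :
    ∃ y : PiLp 1 (fun _ : ι => ℝ), ‖y‖ ≤ 1 ∧ ∑ i, x i * y i = ‖x‖ := by
  classical
  obtain ⟨j, -⟩ : ∃ j, x j ≠ 0 := by
    by_contra! h
    exact hx (PiLp.ext h)
  have : Nonempty ι := ⟨j⟩
  obtain ⟨i₀, hi₀⟩ := exists_eq_ciSup_of_finite (f := fun i => ‖x i‖)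
  refine ⟨PiLp.single 1 i₀ (SignType.sign (x i₀) : ℝ), ?_, ?_⟩
  · rw [norm_single]
    rcases SignType.sign (x i₀) with _ | _ | _ <;> simp
  · rw [norm_eq_ciSup, ← hi₀]
    simp [self_mul_sign]

theorem exists_norm_le_one_sum_mul_eq_norm_of_one (x : PiLp 1 fun _ : ι => ℝ) :
    ∃ y : PiLp ∞ (fun _ : ι => ℝ), ‖y‖ ≤ 1 ∧ ∑ i, x i * y i = ‖x‖ := by
  refine ⟨WithLp.toLp ∞ fun i => (SignType.sign (x i) : ℝ), ?_, ?_⟩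
  · refine (norm_toLp _).trans_le (pi_norm_le_iff_of_nonneg zero_le_one |>.2 fun i => ?_)
    rcases SignType.sign (x i) with _ | _ | _ <;> simp
  · simp [norm_eq_of_L1, self_mul_sign]

theorem exists_norm_le_one_sum_mul_eq_norm_of_ne_top [p.HolderConjugate q]
    (hp₁ : p ≠ 1) (hp : p ≠ ∞) (x : PiLp p fun _ : ι => ℝ) (hx : x ≠ 0) :
    ∃ y : PiLp q (fun _ : ι => ℝ), ‖y‖ ≤ 1 ∧ ∑ i, x i * y i = ‖x‖ := by
  have : Fact (1 ≤ p) := ⟨ENNReal.HolderConjugate.one_le p q⟩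
  have hpq : p.toReal.HolderConjugate q.toReal := by
    refine ENNReal.HolderConjugate.toReal ?_
    simpa using (ENNReal.toReal_lt_toReal ENNReal.one_ne_top hp).2 (this.out.lt_of_ne' hp₁)
  have hx₀ : 0 < ‖x‖ := norm_pos_iff.2 hx
  have hsum : ∑ i, |x i| ^ p.toReal = ‖x‖ ^ p.toReal := by
    simpa using (norm_rpow_eq_sum hpq.pos x).symm
  have hmul (t : ℝ) : t * (SignType.sign t * |t| ^ (p.toReal - 1)) = |t| ^ p.toReal := by
    rw [← mul_assoc, self_mul_sign, ← Real.rpow_one_add' (abs_nonneg t) (by linarith [hpq.pos]),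
      add_sub_cancel]
  have habs (t : ℝ) : |SignType.sign t * |t| ^ (p.toReal - 1)| = |t| ^ (p.toReal - 1) := by
    rcases lt_trichotomy t 0 with ht | rfl | ht
    · simp [sign_neg ht, Real.rpow_nonneg]
    · simp [Real.zero_rpow hpq.sub_one_pos.ne']
    · simp [sign_pos ht, Real.rpow_nonneg]
  have hpow (t : ℝ) : (|t| ^ (p.toReal - 1) / ‖x‖ ^ (p.toReal - 1)) ^ q.toReal
      = |t| ^ p.toReal / ‖x‖ ^ p.toReal := by
    rw [Real.div_rpow (by positivity) (by positivity), ← Real.rpow_mul (abs_nonneg t),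
      ← Real.rpow_mul hx₀.le, hpq.sub_one_mul_conj]
  refine ⟨WithLp.toLp q fun i =>
    SignType.sign (x i) * |x i| ^ (p.toReal - 1) / ‖x‖ ^ (p.toReal - 1), ?_, ?_⟩
  · rw [norm_eq_sum hpq.symm.pos]
    simp only [Real.norm_eq_abs, abs_div, habs, abs_of_pos (Real.rpow_pos_of_pos hx₀ _), hpow]
    rw [← Finset.sum_div, hsum, div_self (by positivity), Real.one_rpow]
  · simp only [mul_div_assoc', hmul]
    rw [← Finset.sum_div, hsum, Real.rpow_sub_one hx₀.ne', div_div_cancel₀ (by positivity)]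

theorem exists_norm_le_one_sum_mul_eq_norm [p.HolderConjugate q] (x : PiLp p fun _ : ι => ℝ) :
    ∃ y : PiLp q (fun _ : ι => ℝ), ‖y‖ ≤ 1 ∧ ∑ i, x i * y i = ‖x‖ := by
  have : Fact (1 ≤ p) := ⟨ENNReal.HolderConjugate.one_le p q⟩
  have : Fact (1 ≤ q) := ⟨ENNReal.HolderConjugate.one_le q p⟩
  rcases eq_or_ne x 0 with rfl | hx
  · exact ⟨0, by simp, by simp⟩
  rcases eq_or_ne p ∞ with rfl | hp
  · obtain rfl : q = 1 := (ENNReal.HolderConjugate.eq_top_iff_eq_one ∞ q).1 rfl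
    exact exists_norm_le_one_sum_mul_eq_norm_of_top x hx
  rcases eq_or_ne p 1 with rfl | hp₁
  · obtain rfl : q = ∞ := (ENNReal.HolderConjugate.eq_top_iff_eq_one q 1).2 rfl
    exact exists_norm_le_one_sum_mul_eq_norm_of_one x
  exact exists_norm_le_one_sum_mul_eq_norm_of_ne_top hp₁ hp x hx

theorem norm_toLp_const_real (p : ℝ≥0∞) [Fact (1 ≤ p)] [Nonempty ι] (c : ℝ) :
    ‖WithLp.toLp p (fun _ : ι => c)‖ = (Fintype.card ι : ℝ) ^ p.toReal⁻¹ * |c| :=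
  (norm_toLp_const' c).trans (by simp)

theorem norm_sub_sum_div_card_le_two_mul [Fact (1 ≤ q)] [Nonempty ι]
    (y : PiLp q fun _ : ι => ℝ) :
    ‖y - WithLp.toLp q (fun _ => (∑ i, y i) / Fintype.card ι)‖ ≤ 2 * ‖y‖ := by
  set p := ENNReal.conjExponent q
  have : Fact (1 ≤ p) := ⟨ENNReal.HolderConjugate.one_le p q⟩
  set n : ℝ := (Fintype.card ι : ℝ)
  have hn : 0 < n := Nat.cast_pos.2 Fintype.card_pos
  have hsum : |∑ i, y i| ≤ n ^ p.toReal⁻¹ * ‖y‖ := by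
    simpa [norm_toLp_const_real] using
      abs_sum_mul_le_norm_mul_norm (WithLp.toLp p fun _ : ι => (1 : ℝ)) y
  calc _ ≤ ‖y‖ + ‖WithLp.toLp q (fun _ => (∑ i, y i) / n)‖ := norm_sub_le _ _
    _ = ‖y‖ + n ^ q.toReal⁻¹ * (|∑ i, y i| / n) := by
        rw [norm_toLp_const_real, abs_div, abs_of_pos hn]
    _ ≤ ‖y‖ + n ^ q.toReal⁻¹ * (n ^ p.toReal⁻¹ * ‖y‖ / n) := by gcongr
    _ = 2 * ‖y‖ := by
        rw [← mul_div_assoc, ← mul_assoc,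
          ENNReal.HolderConjugate.rpow_inv_toReal_mul_rpow_inv_toReal hn.le,
          mul_div_cancel_left₀ _ hn.ne']
        ring

theorem exists_sum_eq_zero_norm_eq_one_norm_le_two_mul [p.HolderConjugate q] [Nontrivial ι]
    (x : PiLp p fun _ : ι => ℝ) (hx : ∑ i, x i = 0) :
    ∃ y : PiLp q (fun _ : ι => ℝ), ∑ i, y i = 0 ∧ ‖y‖ = 1 ∧ ‖x‖ ≤ 2 * ∑ i, x i * y i := by
  have : Fact (1 ≤ p) := ⟨ENNReal.HolderConjugate.one_le p q⟩
  have : Fact (1 ≤ q) := ⟨ENNReal.HolderConjugate.one_le q p⟩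
  suffices h : ∃ z : PiLp q (fun _ : ι => ℝ),
      ∑ i, z i = 0 ∧ z ≠ 0 ∧ ‖x‖ * ‖z‖ ≤ 2 * ∑ i, x i * z i by
    obtain ⟨z, hz₀, hz, hxz⟩ := h
    have hz' : 0 < ‖z‖ := norm_pos_iff.2 hz
    refine ⟨‖z‖⁻¹ • z, ?_, norm_smul_inv_norm hz, ?_⟩
    · simp [← Finset.mul_sum, hz₀]
    · simp only [PiLp.smul_apply, smul_eq_mul, mul_left_comm _ ‖z‖⁻¹, ← Finset.mul_sum]
      calc ‖x‖ = ‖z‖⁻¹ * (‖x‖ * ‖z‖) := by field_simp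
        _ ≤ ‖z‖⁻¹ * (2 * ∑ i, x i * z i) := by gcongr
  rcases eq_or_ne x 0 with rfl | hx₀
  · classical
    obtain ⟨a, b, hab⟩ := exists_pair_ne ι
    refine ⟨PiLp.single q a 1 - PiLp.single q b 1, ?_, ?_, by simp⟩
    · simp [Finset.sum_sub_distrib]
    · intro h
      simpa [hab] using congrArg (fun w => w a) h
  obtain ⟨y, hy, hxy⟩ := exists_norm_le_one_sum_mul_eq_norm (q := q) x
  set z := y - WithLp.toLp q (fun _ => (∑ i, y i) / Fintype.card ι)
  have hxz : ∑ i, x i * z i = ‖x‖ := by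
    simp [z, mul_sub, Finset.sum_sub_distrib, hxy, ← Finset.sum_mul, hx]
  refine ⟨z, ?_, ?_, ?_⟩
  · simp [z, Finset.sum_sub_distrib]
    rw [mul_div_cancel₀ _ (Nat.cast_ne_zero.2 Fintype.card_ne_zero), sub_self]
  · intro hz
    simp only [hz, PiLp.zero_apply, mul_zero, Finset.sum_const_zero] at hxz
    exact hx₀ (norm_eq_zero.1 hxz.symm)
  · rw [hxz, mul_comm]
    have := (norm_sub_sum_div_card_le_two_mul y).trans (by linarith : 2 * ‖y‖ ≤ 2)
    gcongr

end PiLp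

theorem Int.sum_Icc_sub_sub_one {M : Type*} [AddCommGroup M] (f : ℤ → M) {a b : ℤ}
    (hab : a - 1 ≤ b) : ∑ ℓ ∈ Finset.Icc a b, (f ℓ - f (ℓ - 1)) = f b - f (a - 1) := by
  induction b, hab using Int.leInduction with
  | base => simp
  | succ b hab ih =>
    rw [← Finset.insert_Icc_right_eq_Icc_add_one (by omega), Finset.sum_insert (by simp), ih,
      add_sub_cancel_right]
    abel

theorem exists_sub_sub_one_eq_of_sum_eq_zero (N : ℕ) (τ : ℤ → ℝ)
    (hτ : ∑ ℓ ∈ Finset.Icc (-(N : ℤ) + 1) N, τ ℓ = 0) :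
    ∃ v : ℤ → ℝ, (∀ j : ℤ, (N : ℤ) ≤ |j| → v j = 0) ∧
      ∀ ℓ ∈ Finset.Icc (-(N : ℤ) + 1) N, v ℓ - v (ℓ - 1) = τ ℓ := by
  refine ⟨fun j => ∑ ℓ ∈ Finset.Icc (-(N : ℤ) + 1) N, if ℓ ≤ j then τ ℓ else 0, ?_, ?_⟩
  · intro j hj
    rcases le_abs'.1 hj with hj | hj
    · exact Finset.sum_eq_zero fun ℓ hℓ => if_neg (by simp at hℓ; omega)
    · rw [← hτ]
      exact Finset.sum_congr rfl fun ℓ hℓ => if_pos (by simp at hℓ; omega)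
  · intro ℓ hℓ
    rw [← Finset.sum_sub_distrib, ← Finset.sum_ite_eq_of_mem' _ _ τ hℓ]
    refine Finset.sum_congr rfl fun k _ => ?_
    split_ifs <;> first | omega | simp

theorem lpnorm_congr {N : ℕ} {ε : ℝ} {p : ℝ≥0∞} {σ τ : ℤ → ℝ}
    (h : ∀ ℓ ∈ Finset.Icc (-(N : ℤ) + 1) N, σ ℓ = τ ℓ) : lpnorm N ε p σ = lpnorm N ε p τ := by
  unfold lpnorm
  split_ifs
  · exact iSup_congr fun ℓ => by rw [h ℓ ℓ.2]
  · rw [Finset.sum_congr rfl fun ℓ hℓ => by rw [h ℓ hℓ]]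

-- For `p = ∞` the weight is `ε ^ ∞.toReal⁻¹ = ε ^ 0 = 1`.
theorem lpnorm_eq_rpow_mul_norm {N : ℕ} {ε : ℝ} (hε : 0 ≤ ε) {p : ℝ≥0∞} (hp : p ≠ 0)
    (σ : ℤ → ℝ) : lpnorm N ε p σ =
      ε ^ p.toReal⁻¹ * ‖WithLp.toLp p fun ℓ : Finset.Icc (-(N : ℤ) + 1) N => σ ℓ‖ := by
  unfold lpnorm
  split_ifs with h
  · subst h
    simp [PiLp.norm_eq_ciSup]
  · rw [PiLp.norm_eq_sum (ENNReal.toReal_pos hp h), ← one_div, ← Real.mul_rpow hε (by positivity)]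
    simp [Finset.sum_attach _ fun ℓ => |σ ℓ| ^ p.toReal]

theorem mul_sum_mul_le_lpnorm_mul_lpnorm {N : ℕ} {ε : ℝ} (hε : 0 ≤ ε) {p q : ℝ≥0∞}
    [p.HolderConjugate q] (σ τ : ℤ → ℝ) :
    ε * ∑ ℓ ∈ Finset.Icc (-(N : ℤ) + 1) N, σ ℓ * τ ℓ ≤ lpnorm N ε p σ * lpnorm N ε q τ := by
  set I := Finset.Icc (-(N : ℤ) + 1) N
  have holder := (le_abs_self _).trans (PiLp.abs_sum_mul_le_norm_mul_norm
    (WithLp.toLp p fun ℓ : I => σ ℓ) (WithLp.toLp q fun ℓ : I => τ ℓ))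
  rw [lpnorm_eq_rpow_mul_norm hε (ENNReal.HolderConjugate.ne_zero p q),
    lpnorm_eq_rpow_mul_norm hε (ENNReal.HolderConjugate.ne_zero q p), ← Finset.sum_coe_sort,
    mul_mul_mul_comm]
  conv_lhs =>
    rw [← ENNReal.HolderConjugate.rpow_inv_toReal_mul_rpow_inv_toReal (p := p) (q := q) hε]
  gcongr

theorem exists_sum_eq_zero_lpnorm_eq_one_lpnorm_le_two_mul {N : ℕ} (hN : 1 ≤ N) {ε : ℝ}
    (hε : 0 < ε) {p q : ℝ≥0∞} [p.HolderConjugate q] (σ : ℤ → ℝ)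
    (hσ : ∑ ℓ ∈ Finset.Icc (-(N : ℤ) + 1) N, σ ℓ = 0) :
    ∃ τ : ℤ → ℝ, ∑ ℓ ∈ Finset.Icc (-(N : ℤ) + 1) N, τ ℓ = 0 ∧ lpnorm N ε q τ = 1 ∧
      lpnorm N ε p σ ≤ 2 * (ε * ∑ ℓ ∈ Finset.Icc (-(N : ℤ) + 1) N, σ ℓ * τ ℓ) := by
  have : Fact (1 ≤ q) := ⟨ENNReal.HolderConjugate.one_le q p⟩
  set I := Finset.Icc (-(N : ℤ) + 1) N
  have : Nontrivial I :=
    ⟨⟨⟨0, by simp [I]; omega⟩, ⟨1, by simp [I]; omega⟩, by simp⟩⟩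
  obtain ⟨y, hy₀, hy₁, hxy⟩ := PiLp.exists_sum_eq_zero_norm_eq_one_norm_le_two_mul (q := q)
    (WithLp.toLp p fun ℓ : I => σ ℓ) ((Finset.sum_coe_sort I σ).trans hσ)
  set c := ε ^ q.toReal⁻¹
  have hc : 0 < c := Real.rpow_pos_of_pos hε _
  let τ : ℤ → ℝ := Function.extend Subtype.val (fun ℓ : I => y ℓ / c) 0
  have hτ (ℓ : I) : τ ℓ = y ℓ / c := Subtype.val_injective.extend_apply _ _ _
  have hpc : ε ^ p.toReal⁻¹ * c = ε :=
    ENNReal.HolderConjugate.rpow_inv_toReal_mul_rpow_inv_toReal hε.le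
  refine ⟨τ, ?_, ?_, ?_⟩
  · rw [← Finset.sum_coe_sort]
    simp only [hτ, ← Finset.sum_div, hy₀, zero_div]
  · have : (WithLp.toLp q fun ℓ : I => τ ℓ) = c⁻¹ • y := by
      ext ℓ
      simp [hτ, div_eq_inv_mul]
    rw [lpnorm_eq_rpow_mul_norm hε.le (ENNReal.HolderConjugate.ne_zero q p), this, norm_smul, hy₁,
      Real.norm_eq_abs, abs_inv, abs_of_pos hc, mul_one, mul_inv_cancel₀ hc.ne']
  · rw [lpnorm_eq_rpow_mul_norm hε.le (ENNReal.HolderConjugate.ne_zero p q), ← Finset.sum_coe_sort]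
    simp only [hτ]
    calc _ ≤ ε ^ p.toReal⁻¹ * (2 * ∑ ℓ : I, σ ℓ * y ℓ) := by gcongr
      _ = 2 * ((ε ^ p.toReal⁻¹ * c) * ∑ ℓ : I, σ ℓ * (y ℓ / c)) := by
        simp only [Finset.mul_sum]
        exact Finset.sum_congr rfl fun ℓ _ => by field_simp
      _ = _ := by rw [hpc]

theorem dual_characterization_U1p
    (N : ℕ) (hN : 2 ≤ N) (ε : ℝ) (hε : ε = 1 / N)
    (p q : ℝ≥0∞) (hpq : 1 / p + 1 / q = 1)
    (u : ℤ → ℝ) (hu : ∀ j : ℤ, (N : ℤ) ≤ |j| → u j = 0)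
    (S : ℝ)
    (hS : S = sSup {s : ℝ | ∃ v : ℤ → ℝ,
      (∀ j : ℤ, (N : ℤ) ≤ |j| → v j = 0) ∧
      lpnorm N ε q (fun ℓ => (v ℓ - v (ℓ - 1)) / ε) = 1 ∧
      s = ε * ∑ ℓ ∈ Finset.Icc (-(N : ℤ) + 1) (N : ℤ),
        ((u ℓ - u (ℓ - 1)) / ε) * ((v ℓ - v (ℓ - 1)) / ε)}) :
    S ≤ lpnorm N ε p (fun ℓ => (u ℓ - u (ℓ - 1)) / ε) ∧
    lpnorm N ε p (fun ℓ => (u ℓ - u (ℓ - 1)) / ε) ≤ 2 * S := by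
  have : p.HolderConjugate q := ENNReal.holderConjugate_iff.2 (by simpa using hpq)
  have hε₀ : 0 < ε := by rw [hε]; exact one_div_pos.2 (by exact_mod_cast (by omega : 0 < N))
  have hu' : ∑ ℓ ∈ Finset.Icc (-(N : ℤ) + 1) N, (u ℓ - u (ℓ - 1)) / ε = 0 := by
    rw [← Finset.sum_div, Int.sum_Icc_sub_sub_one u (by omega), hu N (by simp),
      hu (-N + 1 - 1) (by rw [abs_of_neg (by omega)]; omega), sub_zero, zero_div]
  obtain ⟨τ, hτ₀, hτ₁, hτ⟩ :=
    exists_sum_eq_zero_lpnorm_eq_one_lpnorm_le_two_mul (p := p) (q := q) (by omega) hε₀ _ hu'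
  obtain ⟨v, hvU, hv⟩ := exists_sub_sub_one_eq_of_sum_eq_zero N (fun ℓ => ε * τ ℓ)
    (by rw [← Finset.mul_sum, hτ₀, mul_zero])
  have hv' : ∀ ℓ ∈ Finset.Icc (-(N : ℤ) + 1) N, (v ℓ - v (ℓ - 1)) / ε = τ ℓ := fun ℓ hℓ => by
    rw [hv ℓ hℓ, mul_div_cancel_left₀ _ hε₀.ne']
  subst hS
  refine sSup_le_and_le_mul_sSup_of_mem zero_le_two ?_ ⟨v, hvU, (lpnorm_congr hv').trans hτ₁,
    congrArg (ε * ·) (Finset.sum_congr rfl fun ℓ hℓ => by rw [hv' ℓ hℓ])⟩ hτ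
  rintro s ⟨w, -, hw, rfl⟩
  simpa [hw] using mul_sum_mul_le_lpnorm_mul_lpnorm (N := N) hε₀.le (p := p) (q := q)
    (fun ℓ => (u ℓ - u (ℓ - 1)) / ε) (fun ℓ => (w ℓ - w (ℓ - 1)) / ε)
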